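/- Let G be a finite simple graph whose vertex set can be partitioned into at most 3 sets each inducing a clique in G (i.e., cp(G) ≤ 3). Then the graph Ĝ obtained from G by adding a universal vertex satisfies vsrc(Ĝ) ≤ 3. -/

import Mathlib

open SimpleGraph

/-- A very strong rainbow coloring: for every shortest path (a path whose length equals the
distance between its endpoints), all edges receive pairwise distinct colors. -/
def IsVSRC {V : Type*} (G : SimpleGraph V) (c : Sym2 V → ℕ) : Prop :=
  ∀ (u v : V) (p : G.Walk u v), p.IsPath → p.length = G.dist u v →
    (p.edges.map c).Nodup

/-- The graph Ĝ obtained from `G` by adding a new universal vertex (`none`). -/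
def hatGraph {V : Type*} (G : SimpleGraph V) : SimpleGraph (Option V) where
  Adj x y :=
    match x, y with
    | some u, some v => G.Adj u v
    | some _, none => True
    | none, some _ => True
    | none, none => False
  symm := by
    constructor
    rintro (_ | u) (_ | v) h <;> simp_all
    exact G.adj_symm h
  loopless := by
    constructor
    rintro (_ | u) h <;> simp_all

/-
Ĝ has diameter at most 2, so the only shortest paths that can repeat a color are the
2-paths `u - w - v` with `u`, `v` distinct and non-adjacent; these lie in `G`, and `u`, `v` lie
in different cliques. Label the clique classes by `Fin 3`, give the universal vertex the label
`0`, and color the edge `xy` by `-(ℓ x + ℓ y)`. The two edges of such a path then get the colors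
`-(ℓ u + ℓ w)` and `-(ℓ w + ℓ v)`, which differ because `ℓ u ≠ ℓ v`.
-/

theorem isVSRC_of_dist_le_two {V : Type*} {G : SimpleGraph V} (c : Sym2 V → ℕ)
    (hdist : ∀ u v, G.dist u v ≤ 2)
    (hc : ∀ u w v, G.Adj u w → G.Adj w v → u ≠ v → ¬G.Adj u v → c s(u, w) ≠ c s(w, v)) :
    IsVSRC G c := by
  intro u v p _ hlen
  match p with
  | .nil => simp
  | .cons _ .nil => simp
  | .cons huw (.cons hwv .nil) =>
    have hlen : G.dist u v = 2 := by simpa using hlen.symm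
    have hne : u ≠ v := by rintro rfl; simp at hlen
    have hnadj : ¬G.Adj u v := fun h => by
      simpa [hlen] using G.dist_le (.cons h .nil)
    simpa using hc u _ v huw hwv hne hnadj
  | .cons _ (.cons _ (.cons _ q)) =>
    have := hdist u v
    simp only [Walk.length_cons] at hlen
    omega

section SumColoring

variable {V : Type*} {n : ℕ}

def sumColoring (ℓ : V → Fin n) : Sym2 V → ℕ :=
  Sym2.lift ⟨fun x y => (-(ℓ x + ℓ y) : Fin n), fun x y => by simp only [add_comm]⟩

@[simp]
theorem sumColoring_mk (ℓ : V → Fin n) (x y : V) :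
    sumColoring ℓ s(x, y) = (-(ℓ x + ℓ y) : Fin n) :=
  rfl

theorem sumColoring_lt (ℓ : V → Fin n) (e : Sym2 V) : sumColoring ℓ e < n :=
  e.ind fun x y => sumColoring_mk ℓ x y ▸ Fin.is_lt _

theorem sumColoring_ne {ℓ : V → Fin n} {u w v : V} (h : ℓ u ≠ ℓ v) :
    sumColoring ℓ s(u, w) ≠ sumColoring ℓ s(w, v) := by
  intro heq
  rw [sumColoring_mk, sumColoring_mk, Fin.val_inj, neg_inj, add_comm (ℓ w)] at heq
  exact h (add_right_cancel heq)

end SumColoring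

section HatGraph

variable {V : Type*} {G : SimpleGraph V}

theorem hatGraph_adj_none {v : V} : (hatGraph G).Adj none (some v) :=
  trivial

theorem hatGraph_dist_le_two (x y : Option V) : (hatGraph G).dist x y ≤ 2 := by
  rcases x with _ | u <;> rcases y with _ | v
  · simp
  · exact ((hatGraph G).dist_le (.cons hatGraph_adj_none .nil)).trans (by simp)
  · exact ((hatGraph G).dist_le (.cons hatGraph_adj_none.symm .nil)).trans (by simp)
  · exact (hatGraph G).dist_le (.cons hatGraph_adj_none.symm (.cons hatGraph_adj_none .nil))

theorem hatGraph_exists_of_not_adj {x y : Option V} (hne : x ≠ y)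
    (hnadj : ¬(hatGraph G).Adj x y) :
    ∃ u v, x = some u ∧ y = some v ∧ u ≠ v ∧ ¬G.Adj u v := by
  rcases x with _ | u <;> rcases y with _ | v
  · exact absurd rfl hne
  · exact absurd hatGraph_adj_none hnadj
  · exact absurd hatGraph_adj_none.symm hnadj
  · exact ⟨u, v, rfl, rfl, fun h => hne (congrArg some h), hnadj⟩

end HatGraph

theorem apply_ne_of_isClique_fibers {V ι : Type*} {G : SimpleGraph V} {f : V → ι}
    (hf : ∀ i, G.IsClique {v | f v = i}) {u v : V} (hne : u ≠ v) (hnadj : ¬G.Adj u v) :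
    f u ≠ f v :=
  fun h => hnadj (hf (f u) rfl h.symm hne)

theorem hatGraph_isVSRC_sumColoring {V : Type*} {G : SimpleGraph V} {n : ℕ} [NeZero n]
    (f : V → Fin n) (hf : ∀ i, G.IsClique {v | f v = i}) :
    IsVSRC (hatGraph G) (sumColoring fun x => x.elim 0 f) := by
  refine isVSRC_of_dist_le_two _ hatGraph_dist_le_two fun x w y _ _ hne hnadj => ?_
  obtain ⟨u, v, rfl, rfl, huv, hGuv⟩ := hatGraph_exists_of_not_adj hne hnadj
  exact sumColoring_ne (apply_ne_of_isClique_fibers hf huv hGuv)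

theorem stmt_8_general {V : Type*} (G : SimpleGraph V)
    (f : V → Fin 3) (hf : ∀ i : Fin 3, G.IsClique {v | f v = i}) :
    ∃ c : Sym2 (Option V) → ℕ, IsVSRC (hatGraph G) c ∧
      ∀ e ∈ (hatGraph G).edgeSet, c e < 3 :=
  ⟨_, hatGraph_isVSRC_sumColoring f hf, fun e _ => sumColoring_lt _ e⟩

theorem stmt_8 {V : Type*} [Fintype V] (G : SimpleGraph V)
    (f : V → Fin 3) (hf : ∀ i : Fin 3, G.IsClique {v | f v = i}) :
    ∃ c : Sym2 (Option V) → ℕ, IsVSRC (hatGraph G) c ∧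
      ∀ e ∈ (hatGraph G).edgeSet, c e < 3 :=
  stmt_8_general G f hf
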